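/- arXiv:2101.08322 — 5 statements merged into one kernel-verified Lean document; each statement's English description precedes it below -/
import Mathlib

section
/- Let a ∈ ℂ with |a| = 1, Re(a) > 0, and let n ≥ 1 be an integer. Then the limit as ε → 0⁺ of [ ∫_ε^∞ dr/(r (r+a)^n) + (log ε)/a^n ] exists and equals (1/a^n)(Log a − ∑_{j=1}^{n−1} 1/j), where Log denotes the principal branch of the logarithm. -/
/-!
Partial fractions give `1 / (r (r + a)^(n+1)) = (1 / (r (r + a)^n) - 1 / (r + a)^(n+1)) / a`, and
`∫_ε^∞ dr / (r + a)^(n+1) = 1 / (n (ε + a)^n)` is finite at `ε = 0`. Hence the regularized integrals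
`I_n(ε) = ∫_ε^∞ dr / (r (r + a)^n) + log ε / a^n` satisfy
`I_(n+1)(ε) = (I_n(ε) - 1 / (n (ε + a)^n)) / a`, and the limits obey the same recurrence, which
produces the harmonic sum. For `n = 1` the antiderivative `(log r - log (r + a)) / a` gives
`I_1(ε) = log (ε + a) / a → Log a / a`; `Re a > 0` keeps `r + a` off the branch cut.
-/

open MeasureTheory Filter Topology Set Complex

section

variable {a : ℂ}

lemma ofReal_add_mem_slitPlane (ha : 0 ≤ a.re) {r : ℝ} (hr : 0 < r) :
    (r : ℂ) + a ∈ slitPlane :=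
  mem_slitPlane_iff.2 <| Or.inl <| by simp only [add_re, ofReal_re]; linarith

lemma le_norm_ofReal_add (ha : 0 ≤ a.re) (r : ℝ) : r ≤ ‖(r : ℂ) + a‖ :=
  calc r ≤ ((r : ℂ) + a).re := by simp only [add_re, ofReal_re]; linarith
    _ ≤ ‖(r : ℂ) + a‖ := re_le_norm _

lemma tendsto_ofReal_add_cobounded (a : ℂ) :
    Tendsto (fun r : ℝ => (r : ℂ) + a) atTop (Bornology.cobounded ℂ) :=
  (tendsto_add_const_cobounded a).comp (RCLike.tendsto_ofReal_atTop_cobounded ℂ)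

lemma tendsto_inv_ofReal_add_pow_atTop (a : ℂ) {m : ℕ} (hm : m ≠ 0) :
    Tendsto (fun r : ℝ => (((r : ℂ) + a) ^ m)⁻¹) atTop (𝓝 0) :=
  tendsto_inv₀_cobounded.comp <|
    (tendsto_pow_cobounded_cobounded hm).comp (tendsto_ofReal_add_cobounded a)

lemma tendsto_log_ofReal_sub_log_ofReal_add_atTop (a : ℂ) :
    Tendsto (fun r : ℝ => log r - log ((r : ℂ) + a)) atTop (𝓝 0) := by
  have h : Tendsto (fun r : ℝ => 1 + a / r) atTop (𝓝 1) := by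
    have hinv := tendsto_inv₀_cobounded.comp (RCLike.tendsto_ofReal_atTop_cobounded ℂ)
    simpa [div_eq_mul_inv] using (hinv.const_mul a).const_add 1
  have hlog := ((continuousAt_clog one_mem_slitPlane).tendsto.comp h).neg
  rw [log_one, neg_zero] at hlog
  refine hlog.congr' ?_
  filter_upwards [eventually_gt_atTop 0, h.eventually_ne one_ne_zero] with r hr hne
  have hfac : (r : ℂ) + a = r * (1 + a / r) := by
    field_simp [ofReal_ne_zero.2 hr.ne']
  simp [hfac, log_ofReal_mul hr hne, ← ofReal_log hr.le]

lemma integrableOn_Ioi_of_norm_le_inv_pow {E : Type*} [NormedAddCommGroup E] {f : ℝ → E}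
    {ε : ℝ} {k : ℕ} (hε : 0 < ε) (hk : 2 ≤ k) (hf : ContinuousOn f (Ioi ε))
    (hle : ∀ r ∈ Ioi ε, ‖f r‖ ≤ (r ^ k)⁻¹) : IntegrableOn f (Ioi ε) := by
  have hk' : -(k : ℝ) < -1 := by
    have : (2 : ℝ) ≤ k := by exact_mod_cast hk
    linarith
  refine (integrableOn_Ioi_rpow_of_lt hk' hε).mono' (hf.aestronglyMeasurable measurableSet_Ioi) ?_
  filter_upwards [ae_restrict_mem measurableSet_Ioi] with r hr
  rw [Real.rpow_neg (hε.trans hr).le, Real.rpow_natCast]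
  exact hle r hr

lemma integrableOn_Ioi_inv_ofReal_add_pow (ha : 0 ≤ a.re) {ε : ℝ} (hε : 0 < ε) {n : ℕ}
    (hn : 2 ≤ n) : IntegrableOn (fun r : ℝ => (((r : ℂ) + a) ^ n)⁻¹) (Ioi ε) := by
  refine integrableOn_Ioi_of_norm_le_inv_pow hε hn ?_ fun r hr => ?_
  · exact ((continuous_ofReal.add continuous_const).pow n).continuousOn.inv₀ fun r hr =>
      pow_ne_zero _ (slitPlane_ne_zero (ofReal_add_mem_slitPlane ha (hε.trans hr)))
  · have hr0 : 0 < r := hε.trans hr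
    rw [norm_inv, norm_pow]
    exact inv_anti₀ (pow_pos hr0 n) (pow_le_pow_left₀ hr0.le (le_norm_ofReal_add ha r) n)

lemma integrableOn_Ioi_one_div_ofReal_mul_ofReal_add_pow (ha : 0 ≤ a.re) {ε : ℝ} (hε : 0 < ε)
    {n : ℕ} (hn : 1 ≤ n) :
    IntegrableOn (fun r : ℝ => 1 / ((r : ℂ) * ((r : ℂ) + a) ^ n)) (Ioi ε) := by
  refine integrableOn_Ioi_of_norm_le_inv_pow hε (by omega : 2 ≤ n + 1) ?_ fun r hr => ?_
  · refine fun r hr => (continuousAt_const.div (by fun_prop) ?_).continuousWithinAt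
    exact mul_ne_zero (ofReal_ne_zero.2 (hε.trans hr).ne')
      (pow_ne_zero _ (slitPlane_ne_zero (ofReal_add_mem_slitPlane ha (hε.trans hr))))
  · have hr0 : 0 < r := hε.trans hr
    rw [norm_div, norm_one, norm_mul, norm_pow, norm_real, Real.norm_of_nonneg hr0.le, one_div,
      pow_succ']
    exact inv_anti₀ (by positivity)
      (mul_le_mul_of_nonneg_left (pow_le_pow_left₀ hr0.le (le_norm_ofReal_add ha r) n) hr0.le)

lemma integral_Ioi_inv_ofReal_add_pow_succ (ha : 0 ≤ a.re) {ε : ℝ} (hε : 0 < ε) {n : ℕ}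
    (hn : n ≠ 0) :
    ∫ r in Ioi ε, (((r : ℂ) + a) ^ (n + 1))⁻¹ = (((ε : ℂ) + a) ^ n)⁻¹ / n := by
  have hderiv : ∀ r ∈ Ici ε, HasDerivAt (fun r : ℝ => -(((r : ℂ) + a) ^ n)⁻¹ / n)
      (((r : ℂ) + a) ^ (n + 1))⁻¹ r := by
    intro r hr
    have hne := slitPlane_ne_zero (ofReal_add_mem_slitPlane ha (hε.trans_le hr))
    have h : HasDerivAt (fun z : ℂ => -((z + a) ^ n)⁻¹ / n) _ (r : ℂ) :=
      ((((hasDerivAt_id' (r : ℂ)).add_const a).pow n).inv (pow_ne_zero n hne)).neg.div_const _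
    refine h.comp_ofReal.congr_deriv ?_
    obtain ⟨m, rfl⟩ := Nat.exists_eq_add_one_of_ne_zero hn
    simp only [Pi.pow_apply, Nat.add_sub_cancel]
    field_simp
    ring
  rw [integral_Ioi_of_hasDerivAt_of_tendsto' hderiv
    (integrableOn_Ioi_inv_ofReal_add_pow ha hε (by omega))
    (by simpa using ((tendsto_inv_ofReal_add_pow_atTop a hn).neg.div_const (n : ℂ)))]
  ring

lemma integral_Ioi_one_div_ofReal_mul_ofReal_add (ha : 0 ≤ a.re) (ha0 : a ≠ 0) {ε : ℝ}
    (hε : 0 < ε) :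
    ∫ r in Ioi ε, 1 / ((r : ℂ) * ((r : ℂ) + a)) = (log ((ε : ℂ) + a) - log ε) / a := by
  have hderiv : ∀ r ∈ Ici ε, HasDerivAt (fun r : ℝ => (log r - log ((r : ℂ) + a)) / a)
      (1 / ((r : ℂ) * ((r : ℂ) + a))) r := by
    intro r hr
    have hr0 : 0 < r := hε.trans_le hr
    have hmem := ofReal_add_mem_slitPlane ha hr0
    have h : HasDerivAt (fun z : ℂ => (log z - log (z + a)) / a) _ (r : ℂ) :=
      ((hasDerivAt_log (ofReal_mem_slitPlane.2 hr0)).sub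
        ((hasDerivAt_log hmem).comp_add_const (r : ℂ) a)).div_const a
    refine h.comp_ofReal.congr_deriv ?_
    field_simp [ofReal_ne_zero.2 hr0.ne', slitPlane_ne_zero hmem]
    ring
  rw [integral_Ioi_of_hasDerivAt_of_tendsto' hderiv
    (by simpa using integrableOn_Ioi_one_div_ofReal_mul_ofReal_add_pow ha hε le_rfl)
    (by simpa using (tendsto_log_ofReal_sub_log_ofReal_add_atTop a).div_const a)]
  ring

noncomputable def regularizedIntegral (a : ℂ) (n : ℕ) (ε : ℝ) : ℂ :=
  (∫ r in Ioi ε, 1 / ((r : ℂ) * ((r : ℂ) + a) ^ n)) + (Real.log ε : ℂ) / a ^ n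

lemma regularizedIntegral_one (ha : 0 ≤ a.re) (ha0 : a ≠ 0) {ε : ℝ} (hε : 0 < ε) :
    regularizedIntegral a 1 ε = log ((ε : ℂ) + a) / a := by
  simp only [regularizedIntegral, pow_one]
  rw [integral_Ioi_one_div_ofReal_mul_ofReal_add ha ha0 hε, ofReal_log hε.le]
  ring

lemma regularizedIntegral_succ (ha : 0 ≤ a.re) (ha0 : a ≠ 0) {ε : ℝ} (hε : 0 < ε) {n : ℕ}
    (hn : 1 ≤ n) :
    regularizedIntegral a (n + 1) ε =
      (regularizedIntegral a n ε - (((ε : ℂ) + a) ^ n)⁻¹ / n) / a := by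
  have hsplit : ∀ r ∈ Ioi ε, 1 / ((r : ℂ) * ((r : ℂ) + a) ^ (n + 1)) =
      (1 / ((r : ℂ) * ((r : ℂ) + a) ^ n) - (((r : ℂ) + a) ^ (n + 1))⁻¹) / a := by
    intro r hr
    have hr0 : (r : ℂ) ≠ 0 := ofReal_ne_zero.2 (hε.trans hr).ne'
    have hra := slitPlane_ne_zero (ofReal_add_mem_slitPlane ha (hε.trans hr))
    field_simp
    ring
  rw [regularizedIntegral, regularizedIntegral, setIntegral_congr_fun measurableSet_Ioi hsplit,
    integral_div, integral_sub (integrableOn_Ioi_one_div_ofReal_mul_ofReal_add_pow ha hε hn)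
      (integrableOn_Ioi_inv_ofReal_add_pow ha hε (by omega)),
    integral_Ioi_inv_ofReal_add_pow_succ ha hε (by omega)]
  field_simp
  ring

theorem tendsto_regularizedIntegral (ha : 0 < a.re) {n : ℕ} (hn : 1 ≤ n) :
    Tendsto (regularizedIntegral a n) (𝓝[>] 0)
      (𝓝 ((1 / a ^ n) * (log a - ∑ j ∈ Finset.Icc 1 (n - 1), 1 / (j : ℂ)))) := by
  have ha0 : a ≠ 0 := slitPlane_ne_zero (mem_slitPlane_iff.2 (Or.inl ha))
  have hshift : Tendsto (fun ε : ℝ => (ε : ℂ) + a) (𝓝[>] 0) (𝓝 a) := by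
    have h : Continuous (fun ε : ℝ => (ε : ℂ) + a) := by fun_prop
    simpa using (h.tendsto 0).mono_left nhdsWithin_le_nhds
  induction n, hn using Nat.le_induction with
  | base =>
    have hlim :
        1 / a ^ 1 * (log a - ∑ j ∈ Finset.Icc 1 (1 - 1), 1 / ((j : ℕ) : ℂ)) = log a / a := by
      simp [div_eq_inv_mul]
    rw [hlim]
    refine Tendsto.congr' ?_ (((continuousAt_clog (Or.inl ha)).tendsto.comp hshift).div_const a)
    filter_upwards [self_mem_nhdsWithin] with ε hε
    exact (regularizedIntegral_one ha.le ha0 hε).symm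
  | succ n hn ih =>
    have hlim : 1 / a ^ (n + 1) * (log a - ∑ j ∈ Finset.Icc 1 (n + 1 - 1), 1 / (j : ℂ)) =
        (1 / a ^ n * (log a - ∑ j ∈ Finset.Icc 1 (n - 1), 1 / (j : ℂ)) - (a ^ n)⁻¹ / n) / a := by
      obtain ⟨m, rfl⟩ := Nat.exists_eq_add_one_of_ne_zero (by omega : n ≠ 0)
      rw [Nat.add_sub_cancel, Nat.add_sub_cancel, Finset.sum_Icc_succ_top (by omega)]
      field_simp
      ring
    rw [hlim]
    refine Tendsto.congr' ?_
      ((ih.sub (((hshift.pow n).inv₀ (pow_ne_zero n ha0)).div_const _)).div_const a)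
    filter_upwards [self_mem_nhdsWithin] with ε hε
    exact (regularizedIntegral_succ ha.le ha0 hε hn).symm

end

theorem heisenberg_log_limit_general (n : ℕ) (hn : 1 ≤ n) (a : ℂ)
    (ha2 : 0 < a.re) :
    Tendsto
      (fun ε : ℝ =>
        (∫ r in Set.Ioi ε, 1 / ((r : ℂ) * ((r : ℂ) + a) ^ n)) +
          (Real.log ε : ℂ) / a ^ n)
      (nhdsWithin 0 (Set.Ioi 0))
      (nhds ((1 / a ^ n) *
        (Complex.log a - ∑ j ∈ Finset.Icc 1 (n - 1), 1 / (j : ℂ)))) :=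
  tendsto_regularizedIntegral ha2 hn

/-- The regularized limit computing the Heisenberg group relative fundamental
solution: for unimodular `a` with positive real part,
`lim_{ε→0⁺} [∫_ε^∞ dr/(r (r+a)^n) + (log ε)/a^n] = (Log a - ∑_{j=1}^{n-1} 1/j)/a^n`. -/
theorem heisenberg_log_limit (n : ℕ) (hn : 1 ≤ n) (a : ℂ)
    (ha1 : ‖a‖ = 1) (ha2 : 0 < a.re) :
    Tendsto
      (fun ε : ℝ =>
        (∫ r in Set.Ioi ε, 1 / ((r : ℂ) * ((r : ℂ) + a) ^ n)) +
          (Real.log ε : ℂ) / a ^ n)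
      (nhdsWithin 0 (Set.Ioi 0))
      (nhds ((1 / a ^ n) *
        (Complex.log a - ∑ j ∈ Finset.Icc 1 (n - 1), 1 / (j : ℂ)))) :=
  heisenberg_log_limit_general n hn a ha2
end

section
/- For x > 0, t ∈ ℝ nonzero (so x + it ≠ 0), and integer n ≥ 1, the integral I = ∫_0^1 (1/r)[ 1/((1+r)x − it(1−r))^n − 1/(x − it)^n ] dr + ∫_0^1 r^{n−1}/((1+r)x + it(1−r))^n dr converges and equals (1/(x+it)^n) · a^{−n} · ( Log a − ∑_{j=1}^{n−1} 1/j ), where a = (x−it)/(x+it) and Log is the principal logarithm. -/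
/-!
Put `α = x - it` and `β = x + it`, both in the right half-plane. The integrands are
`r⁻¹ ((α + rβ)⁻ⁿ - α⁻ⁿ)` and `rⁿ⁻¹ (β + rα)⁻ⁿ`, and with `S(v) = ∑_{k=1}^{n-1} vᵏ/k`, the truncated
series of `-log (1 - v)`, they have the antiderivatives
`α⁻ⁿ (S(α / (α + rβ)) - log (α + rβ))` and `α⁻ⁿ (log (β + rα) - S(rα / (β + rα)))`:
differentiating either one leaves a geometric sum that collapses to the integrand. At `r = 1`
the two antiderivatives cancel, at `r = 0` they give `α⁻ⁿ (log α - log β - H_{n-1})`, and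
`log α - log β = Log (α / β)` because `α` and `β` lie in the right half-plane.
-/

open MeasureTheory Set Complex Finset

noncomputable def negLogOneSubPartialSum (m : ℕ) (v : ℂ) : ℂ :=
  ∑ i ∈ range m, v ^ (i + 1) / (i + 1)

theorem hasDerivAt_negLogOneSubPartialSum (m : ℕ) (v : ℂ) :
    HasDerivAt (negLogOneSubPartialSum m) (∑ i ∈ range m, v ^ i) v := by
  unfold negLogOneSubPartialSum
  refine (HasDerivAt.fun_sum fun i _ => (hasDerivAt_pow (i + 1) v).div_const _).congr_deriv ?_
  refine Finset.sum_congr rfl fun i _ => ?_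
  have : (i + 1 : ℂ) ≠ 0 := by exact_mod_cast i.succ_ne_zero
  push_cast
  field_simp

theorem negLogOneSubPartialSum_one (m : ℕ) :
    negLogOneSubPartialSum m 1 = ∑ j ∈ Icc 1 m, 1 / (j : ℂ) := by
  rw [negLogOneSubPartialSum, ← Finset.Ico_add_one_right_eq_Icc, Finset.sum_Ico_eq_sum_range]
  simp [add_comm]

theorem Complex.log_div_of_re_pos {α β : ℂ} (hα : 0 < α.re) (hβ : 0 < β.re) :
    log (α / β) = log α - log β := by
  have hα' := abs_arg_lt_pi_div_two_iff.mpr (Or.inl hα)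
  have hβ' := abs_arg_lt_pi_div_two_iff.mpr (Or.inl hβ)
  rw [abs_lt] at hα' hβ'
  calc log (α / β) = log (exp (log α - log β)) := by
        rw [exp_sub, exp_log (ne_zero_of_re_pos hα), exp_log (ne_zero_of_re_pos hβ)]
    _ = log α - log β := log_exp (by simp [log_im]; linarith) (by simp [log_im]; linarith)

theorem integrableOn_Ioo_and_integral_eq_sub_of_hasDerivAt {E : Type*} [NormedAddCommGroup E]
    [NormedSpace ℝ E] [CompleteSpace E] {F f g : ℝ → E} {a b : ℝ} (hab : a ≤ b)
    (hF : ∀ r ∈ Icc a b, HasDerivAt F (f r) r) (hf : ContinuousOn f (Icc a b))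
    (hfg : EqOn f g (Ioo a b)) :
    IntegrableOn g (Ioo a b) ∧ ∫ r in Ioo a b, g r = F b - F a := by
  rw [← uIcc_of_le hab] at hF hf
  have hint := hf.intervalIntegrable (μ := volume)
  refine ⟨?_, ?_⟩
  · exact (((intervalIntegrable_iff_integrableOn_Ioc_of_le hab).mp hint).mono_set
      Ioo_subset_Ioc_self).congr_fun hfg measurableSet_Ioo
  · rw [← setIntegral_congr_fun measurableSet_Ioo hfg, ← integral_Ioc_eq_integral_Ioo,
      ← intervalIntegral.integral_of_le hab, intervalIntegral.integral_eq_sub_of_hasDerivAt hF hint]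

theorem re_add_ofReal_mul_pos {α β : ℂ} (hα : 0 < α.re) (hβ : 0 < β.re) {r : ℝ} (hr : 0 ≤ r) :
    0 < (α + r * β).re := by
  simpa using add_pos_of_pos_of_nonneg hα (mul_nonneg hr hβ.le)

theorem one_div_mul_sub_eq_geom_sum (n : ℕ) {α β z : ℂ} (hα : α ≠ 0) (hz : z ≠ 0)
    (hu : α + z * β ≠ 0) :
    1 / z * (1 / (α + z * β) ^ n - 1 / α ^ n) =
      -β / (α ^ n * (α + z * β)) * ∑ i ∈ range n, (α / (α + z * β)) ^ i := by
  have h := geom_sum_mul (α / (α + z * β)) n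
  rw [div_pow] at h
  field_simp at h ⊢
  linear_combination -h

theorem hasDerivAt_antideriv_inv_mul_inv_pow_sub {α β : ℂ} (hα : 0 < α.re) (hβ : 0 < β.re)
    (m : ℕ) {r : ℝ} (hr : 0 ≤ r) :
    HasDerivAt (fun s : ℝ => (α ^ (m + 1))⁻¹ *
        (negLogOneSubPartialSum m (α / (α + s * β)) - log (α + s * β)))
      (-β / (α ^ (m + 1) * (α + r * β)) * ∑ i ∈ range (m + 1), (α / (α + r * β)) ^ i) r := by
  have hu := re_add_ofReal_mul_pos hα hβ hr
  have hu0 : α + r * β ≠ 0 := ne_zero_of_re_pos hu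
  have hlin : HasDerivAt (fun s : ℝ => α + s * β) β r := by
    simpa using ((hasDerivAt_id r).ofReal_comp.mul_const β).const_add α
  have hfrac := (hasDerivAt_const (r : ℝ) α).div hlin hu0
  have := (((hasDerivAt_negLogOneSubPartialSum m _).comp r hfrac).sub
    (hlin.clog_real (mem_slitPlane_iff.mpr (Or.inl hu)))).const_mul (α ^ (m + 1))⁻¹
  refine this.congr_deriv ?_
  simp only [Pi.div_apply]
  rw [geom_sum_succ]
  generalize ∑ i ∈ range m, (α / (α + r * β)) ^ i = S
  field_simp
  ring

theorem hasDerivAt_antideriv_pow_div_pow {α β : ℂ} (hα : 0 < α.re) (hβ : 0 < β.re)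
    (m : ℕ) {r : ℝ} (hr : 0 ≤ r) :
    HasDerivAt (fun s : ℝ => (α ^ (m + 1))⁻¹ *
        (log (β + s * α) - negLogOneSubPartialSum m (s * α / (β + s * α))))
      ((r : ℂ) ^ m / (β + r * α) ^ (m + 1)) r := by
  have hu := re_add_ofReal_mul_pos hβ hα hr
  have hu0 : β + r * α ≠ 0 := ne_zero_of_re_pos hu
  have hα0 : α ≠ 0 := ne_zero_of_re_pos hα
  have hlin : HasDerivAt (fun s : ℝ => β + s * α) α r := by
    simpa using ((hasDerivAt_id r).ofReal_comp.mul_const α).const_add β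
  have hnum : HasDerivAt (fun s : ℝ => (s : ℂ) * α) α r := by
    simpa using (hasDerivAt_id r).ofReal_comp.mul_const α
  have hfrac := hnum.div hlin hu0
  have := ((hlin.clog_real (mem_slitPlane_iff.mpr (Or.inl hu))).sub
    ((hasDerivAt_negLogOneSubPartialSum m _).comp r hfrac)).const_mul (α ^ (m + 1))⁻¹
  refine this.congr_deriv ?_
  have h := geom_sum_mul ((r : ℂ) * α / (β + r * α)) m
  rw [div_pow] at h
  simp only [Pi.div_apply]
  generalize ∑ i ∈ range m, ((r : ℂ) * α / (β + r * α)) ^ i = S at h ⊢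
  field_simp at h ⊢
  linear_combination α * (β + r * α) * h

theorem integrableOn_and_integral_inv_mul_inv_pow_sub {α β : ℂ} (hα : 0 < α.re) (hβ : 0 < β.re)
    (m : ℕ) :
    IntegrableOn (fun r : ℝ => 1 / (r : ℂ) * (1 / (α + r * β) ^ (m + 1) - 1 / α ^ (m + 1)))
        (Ioo 0 1) ∧
      ∫ r in Ioo (0 : ℝ) 1, 1 / (r : ℂ) * (1 / (α + r * β) ^ (m + 1) - 1 / α ^ (m + 1)) =
        (α ^ (m + 1))⁻¹ * (negLogOneSubPartialSum m (α / (α + β)) - log (α + β) -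
          ∑ j ∈ Icc 1 m, 1 / (j : ℂ) + log α) := by
  have hu : ∀ r ∈ Icc (0 : ℝ) 1, α + r * β ≠ 0 := fun r hr =>
    ne_zero_of_re_pos (re_add_ofReal_mul_pos hα hβ hr.1)
  have hcont : ContinuousOn (fun r : ℝ => -β / (α ^ (m + 1) * (α + r * β)) *
      ∑ i ∈ range (m + 1), (α / (α + r * β)) ^ i) (Icc 0 1) := by
    refine continuousOn_of_forall_continuousAt fun r hr => ?_
    fun_prop (disch := simp [ne_zero_of_re_pos hα, hu r hr])
  obtain ⟨hint, heq⟩ := integrableOn_Ioo_and_integral_eq_sub_of_hasDerivAt zero_le_one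
    (fun r hr => hasDerivAt_antideriv_inv_mul_inv_pow_sub hα hβ m hr.1) hcont
    (fun r hr => (one_div_mul_sub_eq_geom_sum (m + 1) (ne_zero_of_re_pos hα)
      (ofReal_ne_zero.mpr hr.1.ne') (hu r (Ioo_subset_Icc_self hr))).symm)
  refine ⟨hint, heq.trans ?_⟩
  simp [div_self (ne_zero_of_re_pos hα), negLogOneSubPartialSum_one]
  ring

theorem integrableOn_and_integral_pow_div_pow {α β : ℂ} (hα : 0 < α.re) (hβ : 0 < β.re)
    (m : ℕ) :
    IntegrableOn (fun r : ℝ => (r : ℂ) ^ m / (β + r * α) ^ (m + 1)) (Ioo 0 1) ∧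
      ∫ r in Ioo (0 : ℝ) 1, (r : ℂ) ^ m / (β + r * α) ^ (m + 1) =
        (α ^ (m + 1))⁻¹ * (log (β + α) - negLogOneSubPartialSum m (α / (β + α)) - log β) := by
  have hu : ∀ r ∈ Icc (0 : ℝ) 1, β + r * α ≠ 0 := fun r hr =>
    ne_zero_of_re_pos (re_add_ofReal_mul_pos hβ hα hr.1)
  have hcont : ContinuousOn (fun r : ℝ => (r : ℂ) ^ m / (β + r * α) ^ (m + 1)) (Icc 0 1) := by
    refine continuousOn_of_forall_continuousAt fun r hr => ?_
    fun_prop (disch := simp [hu r hr])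
  obtain ⟨hint, heq⟩ := integrableOn_Ioo_and_integral_eq_sub_of_hasDerivAt zero_le_one
    (fun r hr => hasDerivAt_antideriv_pow_div_pow hα hβ m hr.1) hcont (fun _ _ => rfl)
  refine ⟨hint, heq.trans ?_⟩
  simp [negLogOneSubPartialSum]
  ring

theorem heisenberg_key_integral_general (x t : ℝ) (hx : 0 < x)
    (n : ℕ) (hn : 1 ≤ n) :
    IntegrableOn
        (fun r : ℝ => (1 / (r : ℂ)) *
          (1 / (((1 + r) * x : ℂ) - t * Complex.I * (1 - r)) ^ n -
            1 / ((x : ℂ) - t * Complex.I) ^ n)) (Set.Ioo 0 1) ∧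
      IntegrableOn
        (fun r : ℝ => (r : ℂ) ^ (n - 1) /
          (((1 + r) * x : ℂ) + t * Complex.I * (1 - r)) ^ n) (Set.Ioo 0 1) ∧
      (∫ r in Set.Ioo (0 : ℝ) 1, (1 / (r : ℂ)) *
            (1 / (((1 + r) * x : ℂ) - t * Complex.I * (1 - r)) ^ n -
              1 / ((x : ℂ) - t * Complex.I) ^ n)) +
          (∫ r in Set.Ioo (0 : ℝ) 1, (r : ℂ) ^ (n - 1) /
            (((1 + r) * x : ℂ) + t * Complex.I * (1 - r)) ^ n) =
        (1 / ((x : ℂ) + t * Complex.I) ^ n) *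
          (((x - t * Complex.I) / (x + t * Complex.I)) ^ n)⁻¹ *
          (Complex.log ((x - t * Complex.I) / (x + t * Complex.I)) -
            ∑ j ∈ Finset.Icc 1 (n - 1), 1 / (j : ℂ)) := by
  obtain ⟨m, rfl⟩ : ∃ m, n = m + 1 := ⟨n - 1, by omega⟩
  set α : ℂ := x - t * I
  set β : ℂ := x + t * I
  have hα : 0 < α.re := by simpa [α] using hx
  have hβ : 0 < β.re := by simpa [β] using hx
  have hu : ∀ r : ℝ, ((1 + r) * x : ℂ) - t * I * (1 - r) = α + r * β := fun r => by ring
  have hv : ∀ r : ℝ, ((1 + r) * x : ℂ) + t * I * (1 - r) = β + r * α := fun r => by ring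
  obtain ⟨hint₁, heq₁⟩ := integrableOn_and_integral_inv_mul_inv_pow_sub hα hβ m
  obtain ⟨hint₂, heq₂⟩ := integrableOn_and_integral_pow_div_pow hα hβ m
  simp only [hu, hv, Nat.add_sub_cancel]
  refine ⟨hint₁, hint₂, ?_⟩
  rw [heq₁, heq₂, add_comm β α, log_div_of_re_pos hα hβ]
  have hβ0 : β ^ (m + 1) ≠ 0 := pow_ne_zero _ (ne_zero_of_re_pos hβ)
  rw [div_pow, inv_div, div_mul_div_cancel₀ hβ0]
  ring

/-- Key integral evaluation in the Heisenberg group relative fundamental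
solution (Theorem 5.3). -/
theorem heisenberg_key_integral (x t : ℝ) (hx : 0 < x) (ht : t ≠ 0)
    (n : ℕ) (hn : 1 ≤ n) :
    IntegrableOn
        (fun r : ℝ => (1 / (r : ℂ)) *
          (1 / (((1 + r) * x : ℂ) - t * Complex.I * (1 - r)) ^ n -
            1 / ((x : ℂ) - t * Complex.I) ^ n)) (Set.Ioo 0 1) ∧
      IntegrableOn
        (fun r : ℝ => (r : ℂ) ^ (n - 1) /
          (((1 + r) * x : ℂ) + t * Complex.I * (1 - r)) ^ n) (Set.Ioo 0 1) ∧
      (∫ r in Set.Ioo (0 : ℝ) 1, (1 / (r : ℂ)) *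
            (1 / (((1 + r) * x : ℂ) - t * Complex.I * (1 - r)) ^ n -
              1 / ((x : ℂ) - t * Complex.I) ^ n)) +
          (∫ r in Set.Ioo (0 : ℝ) 1, (r : ℂ) ^ (n - 1) /
            (((1 + r) * x : ℂ) + t * Complex.I * (1 - r)) ^ n) =
        (1 / ((x : ℂ) + t * Complex.I) ^ n) *
          (((x - t * Complex.I) / (x + t * Complex.I)) ^ n)⁻¹ *
          (Complex.log ((x - t * Complex.I) / (x + t * Complex.I)) -
            ∑ j ∈ Finset.Icc 1 (n - 1), 1 / (j : ℂ)) :=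
  heisenberg_key_integral_general x t hx n hn
end

section
/- The Szegő kernel on the product of two Heisenberg groups satisfies: for z₁, z₂ ∈ ℂ nonzero and t₁, t₂ ∈ ℝ, (6/π⁴) ∫_π^{3π/2} (cos θ sin θ) / ( (|z₁|² + i t₁) cos θ + (|z₂|² + i t₂) sin θ )⁴ dθ = 1 / ( π⁴ (|z₁|² + i t₁)² (|z₂|² + i t₂)² ). -/
open MeasureTheory Real

/-!
On `[π, 3π/2]` both `cos θ` and `sin θ` are nonpositive and never vanish together, so for
`Re a, Re b > 0` the denominator `a cos θ + b sin θ` has negative real part. The substitution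
`t = tan θ` turns the integrand into `t / (a + bt)⁴ dt`, whose explicit primitive, rewritten in
`θ`, vanishes at `θ = π` and equals `1 / (6a²b²)` at `θ = 3π/2`. With `a = |z₁|² + i t₁` and
`b = |z₂|² + i t₂` this is the claimed value.
-/

section
variable {a b : ℂ}

lemma re_mul_cos_add_mul_sin_neg (ha : 0 < a.re) (hb : 0 < b.re) {θ : ℝ}
    (hc : cos θ ≤ 0) (hs : sin θ ≤ 0) : (a * cos θ + b * sin θ).re < 0 := by
  have hpy := sin_sq_add_cos_sq θ
  rw [Complex.add_re, Complex.re_mul_ofReal, Complex.re_mul_ofReal]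
  rcases hc.lt_or_eq with hc | hc
  · nlinarith [mul_nonpos_of_nonneg_of_nonpos hb.le hs]
  · rw [hc] at hpy ⊢
    nlinarith

lemma mul_cos_add_mul_sin_ne_zero (ha : 0 < a.re) (hb : 0 < b.re) {θ : ℝ}
    (hθ : θ ∈ Set.Icc π (3 * π / 2)) : a * cos θ + b * sin θ ≠ 0 := by
  obtain ⟨hθπ, hθ3π⟩ := hθ
  have hc : cos θ ≤ 0 := cos_nonpos_of_pi_div_two_le_of_le (by linarith [pi_pos]) (by linarith)
  have hs : sin θ ≤ 0 := by
    have := sin_nonneg_of_nonneg_of_le_pi (x := θ - π) (by linarith) (by linarith)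
    rwa [sin_sub_pi, neg_nonneg] at this
  intro h
  exact (re_mul_cos_add_mul_sin_neg ha hb hc hs).ne (by rw [h, Complex.zero_re])

/-- In terms of `t = tan θ` this is `t² (3a + bt) / (6a² (a + bt)³)`, a primitive of
`t / (a + bt)⁴`. -/
lemma hasDerivAt_sin_sq_mul_div (ha : a ≠ 0) {θ : ℝ} (hθ : a * cos θ + b * sin θ ≠ 0) :
    HasDerivAt (fun θ : ℝ => (sin θ : ℂ) ^ 2 * (3 * a * cos θ + b * sin θ) /
        (6 * a ^ 2 * (a * cos θ + b * sin θ) ^ 3))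
      (cos θ * sin θ / (a * cos θ + b * sin θ) ^ 4) θ := by
  have hc : HasDerivAt (fun θ : ℝ => (cos θ : ℂ)) (-sin θ) θ := by
    simpa using (hasDerivAt_cos θ).ofReal_comp
  have hs : HasDerivAt (fun θ : ℝ => (sin θ : ℂ)) (cos θ) θ := (hasDerivAt_sin θ).ofReal_comp
  have hnum := (hs.fun_pow 2).fun_mul ((hc.const_mul (3 * a)).fun_add (hs.const_mul b))
  have hden := (((hc.const_mul a).fun_add (hs.const_mul b)).fun_pow 3).const_mul (6 * a ^ 2)
  refine (hnum.fun_div hden (mul_ne_zero (by simpa using ha) (pow_ne_zero 3 hθ))).congr_deriv ?_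
  have hpy : (sin θ : ℂ) ^ 2 + (cos θ : ℂ) ^ 2 = 1 := by exact_mod_cast sin_sq_add_cos_sq θ
  generalize (cos θ : ℂ) = c at hθ hpy ⊢
  generalize (sin θ : ℂ) = s at hθ hpy ⊢
  rw [div_eq_div_iff (pow_ne_zero 2 (mul_ne_zero (by simpa using ha) (pow_ne_zero 3 hθ)))
    (pow_ne_zero 4 hθ)]
  push_cast
  linear_combination 36 * a ^ 4 * s * c * (a * c + b * s) ^ 6 * hpy

lemma integral_cos_mul_sin_div_pow_four (ha : 0 < a.re) (hb : 0 < b.re) :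
    ∫ θ in π..(3 * π / 2), (cos θ * sin θ : ℂ) / (a * cos θ + b * sin θ) ^ 4 =
      1 / (6 * a ^ 2 * b ^ 2) := by
  have ha0 : a ≠ 0 := fun h => by simp [h] at ha
  have hb0 : b ≠ 0 := fun h => by simp [h] at hb
  have hle : π ≤ 3 * π / 2 := by linarith [pi_pos]
  have hD : ∀ θ ∈ Set.uIcc π (3 * π / 2), a * cos θ + b * sin θ ≠ 0 := fun θ hθ =>
    mul_cos_add_mul_sin_ne_zero ha hb (Set.uIcc_of_le hle ▸ hθ)
  rw [intervalIntegral.integral_eq_sub_of_hasDerivAt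
    (fun θ hθ => hasDerivAt_sin_sq_mul_div ha0 (hD θ hθ))
    ((by fun_prop : Continuous fun θ : ℝ => (cos θ * sin θ : ℂ)).continuousOn.div
      (by fun_prop) fun θ hθ => pow_ne_zero 4 (hD θ hθ)).intervalIntegrable]
  have h3π : 3 * π / 2 = π / 2 + π := by ring
  have hcos : cos (3 * π / 2) = 0 := by rw [h3π, cos_add_pi, cos_pi_div_two, neg_zero]
  have hsin : sin (3 * π / 2) = -1 := by rw [h3π, sin_add_pi, sin_pi_div_two]
  simp only [hcos, hsin, sin_pi, cos_pi]
  push_cast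
  simp only [mul_zero, zero_mul, add_zero, zero_add, zero_pow two_ne_zero]
  field_simp
  ring

end

/-- Evaluation of the Szegő kernel for the product of two Heisenberg groups. -/
theorem szego_product_heisenberg (z1 z2 : ℂ) (hz1 : z1 ≠ 0) (hz2 : z2 ≠ 0)
    (t1 t2 : ℝ) :
    (6 / (π : ℂ) ^ 4) *
        ∫ θ in Set.Ioo π (3 * π / 2),
          ((Real.cos θ : ℂ) * (Real.sin θ : ℂ)) /
            (((‖z1‖ ^ 2 : ℝ) + t1 * Complex.I) * Real.cos θ +
              ((‖z2‖ ^ 2 : ℝ) + t2 * Complex.I) * Real.sin θ) ^ 4 =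
      1 / ((π : ℂ) ^ 4 * ((‖z1‖ ^ 2 : ℝ) + t1 * Complex.I) ^ 2 *
        ((‖z2‖ ^ 2 : ℝ) + t2 * Complex.I) ^ 2) := by
  have hre : ∀ {z : ℂ} (t : ℝ), z ≠ 0 → 0 < ((‖z‖ ^ 2 : ℝ) + t * Complex.I).re := fun t hz => by
    simpa [← Complex.ofReal_pow] using pow_pos (norm_pos_iff.2 hz) 2
  rw [← integral_Ioc_eq_integral_Ioo, ← intervalIntegral.integral_of_le (by linarith [pi_pos]),
    integral_cos_mul_sin_div_pow_four (hre t1 hz1) (hre t2 hz2)]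
  have hπ : (π : ℂ) ≠ 0 := Complex.ofReal_ne_zero.2 pi_ne_zero
  field_simp
end

section
/- Let b, c ∈ ℂ with Re(b) > 0 and Re(c) > 0. Then ∫_π^{3π/2} (cos θ sin θ)/(b cos θ + c sin θ)⁴ dθ = 1/(6 b² c²). -/
/-!
Put `D θ = b cos θ + c sin θ` and substitute `u = sin θ / D θ`. Then `du/dθ = b / D²` and
`cos θ / D = (1 - c u) / b`, so the integrand is `u (1 - c u) / b² · du/dθ`, with primitive
`(u² / 2 - c u³ / 3) / b²`. As `θ` runs from `π` to `3π/2`, `u` runs from `0` to `1/c`, and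
`∫₀^{1/c} u (1 - c u) du = 1 / (6 c²)`.
On `[π, 3π/2]` both `cos` and `sin` are nonpositive, so `Re D < 0` and the substitution is regular.
-/

open MeasureTheory Real

noncomputable section

namespace SzegoIntegral

variable (b c : ℂ)

def trigComb (θ : ℝ) : ℂ := b * cos θ + c * sin θ

def primitive (θ : ℝ) : ℂ :=
  ((sin θ / trigComb b c θ) ^ 2 / 2 - c / 3 * (sin θ / trigComb b c θ) ^ 3) / b ^ 2

variable {b c}

lemma continuous_trigComb : Continuous (trigComb b c) := by
  unfold trigComb
  fun_prop

lemma trigComb_re_neg (hb : 0 < b.re) (hc : 0 < c.re) {θ : ℝ} (hcos : cos θ ≤ 0)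
    (hsin : sin θ ≤ 0) : (trigComb b c θ).re < 0 := by
  have hre : (trigComb b c θ).re = b.re * cos θ + c.re * sin θ := by
    simp only [trigComb, Complex.add_re, Complex.mul_re, Complex.ofReal_re, Complex.ofReal_im,
      mul_zero, sub_zero]
  rw [hre]
  by_contra! h
  have hcos0 : cos θ = 0 := by nlinarith [mul_nonpos_of_nonneg_of_nonpos hc.le hsin]
  have hsin0 : sin θ = 0 := by nlinarith [mul_nonpos_of_nonneg_of_nonpos hb.le hcos]
  simpa [hcos0, hsin0] using sin_sq_add_cos_sq θ

lemma trigComb_ne_zero_of_mem_Icc (hb : 0 < b.re) (hc : 0 < c.re) {θ : ℝ}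
    (hθ : θ ∈ Set.Icc π (3 * π / 2)) : trigComb b c θ ≠ 0 := by
  obtain ⟨hlo, hhi⟩ := hθ
  have hcos : cos θ ≤ 0 := cos_nonpos_of_pi_div_two_le_of_le (by linarith [pi_pos]) (by linarith)
  have hsin : sin θ ≤ 0 := by
    rw [← sin_sub_two_pi]
    exact sin_nonpos_of_nonpos_of_neg_pi_le (by linarith [pi_pos]) (by linarith)
  intro h
  simpa [h] using trigComb_re_neg hb hc hcos hsin

lemma hasDerivAt_trigComb (θ : ℝ) :
    HasDerivAt (trigComb b c) (-b * sin θ + c * cos θ) θ :=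
  (((hasDerivAt_cos θ).ofReal_comp.const_mul b).add
    ((hasDerivAt_sin θ).ofReal_comp.const_mul c)).congr_deriv (by push_cast; ring)

lemma hasDerivAt_sin_div_trigComb {θ : ℝ} (hD : trigComb b c θ ≠ 0) :
    HasDerivAt (fun t => (sin t : ℂ) / trigComb b c t) (b / trigComb b c θ ^ 2) θ := by
  refine ((hasDerivAt_sin θ).ofReal_comp.div (hasDerivAt_trigComb θ) hD).congr_deriv ?_
  have hpyth : (sin θ : ℂ) ^ 2 + (cos θ : ℂ) ^ 2 = 1 := by exact_mod_cast sin_sq_add_cos_sq θ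
  rw [trigComb]
  linear_combination b * hpyth / (b * cos θ + c * sin θ) ^ 2

lemma hasDerivAt_primitive (hb : b ≠ 0) {θ : ℝ} (hD : trigComb b c θ ≠ 0) :
    HasDerivAt (primitive b c) ((cos θ : ℂ) * sin θ / trigComb b c θ ^ 4) θ := by
  have hu := hasDerivAt_sin_div_trigComb hD
  refine ((((hu.fun_pow 2).div_const 2).sub
    ((hu.fun_pow 3).const_mul (c / 3))).div_const (b ^ 2)).congr_deriv ?_
  norm_num only
  field_simp
  rw [trigComb]
  ring

lemma primitive_pi : primitive b c π = 0 := by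
  simp [primitive]

lemma primitive_three_pi_div_two (hb : b ≠ 0) (hc : c ≠ 0) :
    primitive b c (3 * π / 2) = 1 / (6 * b ^ 2 * c ^ 2) := by
  have h : 3 * π / 2 = π / 2 + π := by ring
  simp only [primitive, trigComb, h, sin_add_pi, cos_add_pi, sin_pi_div_two, cos_pi_div_two,
    neg_zero, Complex.ofReal_zero, Complex.ofReal_neg, Complex.ofReal_one, mul_zero, zero_add,
    mul_neg_one, neg_div_neg_eq]
  field_simp
  ring

lemma intervalIntegral_eq_primitive_sub (hb : 0 < b.re) (hc : 0 < c.re) :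
    ∫ θ in π..(3 * π / 2), (cos θ : ℂ) * sin θ / trigComb b c θ ^ 4 =
      primitive b c (3 * π / 2) - primitive b c π := by
  have hD : ∀ θ ∈ Set.uIcc π (3 * π / 2), trigComb b c θ ≠ 0 := by
    rw [Set.uIcc_of_le (by linarith [pi_pos])]
    exact fun θ hθ => trigComb_ne_zero_of_mem_Icc hb hc hθ
  have hcont : ContinuousOn (fun θ => (cos θ : ℂ) * sin θ / trigComb b c θ ^ 4)
      (Set.uIcc π (3 * π / 2)) :=
    ContinuousOn.div (by fun_prop) (continuous_trigComb.pow 4).continuousOn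
      fun θ hθ => pow_ne_zero 4 (hD θ hθ)
  exact intervalIntegral.integral_eq_sub_of_hasDerivAt
    (fun θ hθ => hasDerivAt_primitive (Complex.ne_zero_of_re_pos hb) (hD θ hθ))
    hcont.intervalIntegrable

end SzegoIntegral

end

/-- Abstract form of the Szegő kernel evaluation for the product of
Heisenberg groups. -/
theorem szego_integral_eval (b c : ℂ) (hb : 0 < b.re) (hc : 0 < c.re) :
    (∫ θ in Set.Ioo π (3 * π / 2),
        ((Real.cos θ : ℂ) * (Real.sin θ : ℂ)) /
          (b * Real.cos θ + c * Real.sin θ) ^ 4) =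
      1 / (6 * b ^ 2 * c ^ 2) := by
  rw [← integral_Ioc_eq_integral_Ioo, ← intervalIntegral.integral_of_le (by linarith [pi_pos])]
  calc _ = SzegoIntegral.primitive b c (3 * π / 2) - SzegoIntegral.primitive b c π :=
        SzegoIntegral.intervalIntegral_eq_primitive_sub hb hc
    _ = 1 / (6 * b ^ 2 * c ^ 2) := by
      rw [SzegoIntegral.primitive_three_pi_div_two (Complex.ne_zero_of_re_pos hb)
        (Complex.ne_zero_of_re_pos hc), SzegoIntegral.primitive_pi, sub_zero]
end

section
/- For integers n, m ≥ 1, real numbers μ₁, …, μ_n > 0, A₀ := ∑_j μ_j |z_j|² with z ∈ ℂⁿ nonzero amounts to A₀ > 0; then the function g(r) := (∏_{j=1}^n μ_j/(1 − r^{μ_j})) · (A(r) − ib)^{−(n+m−1)} − (∏_{j=1}^n μ_j) · (A(0) − ib)^{−(n+m−1)}, where A(r) = ∑_{j=1}^n μ_j (1 + r^{μ_j})/(1 − r^{μ_j}) |z_j|² and b ∈ ℝ, satisfies g(r)/r is integrable on (0,1). -/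
/-!
Write the integrand as `Φ(r^μ₁, …, r^μₙ) - Φ(0)` with
`Φ(t) = ∏ⱼ μⱼ / (1 - tⱼ) · (A(t) - i b)^(-N)`, `N = n + m - 1`, and
`A(t) = ∑ⱼ μⱼ (1 + tⱼ) / (1 - tⱼ) |zⱼ|²`. On `[0, 1)ⁿ` we have `A(t) ≥ A(0) > 0`,
so `Φ` is differentiable there. Near `r = 0`, differentiability of `Φ` at `0` gives a bound
`O(maxⱼ r^μⱼ) = O(r^c)` with `c = minⱼ μⱼ`, so the integrand divided by `r` is
`O(r^(c-1))`, which is integrable. Near `r = 1`, Bernoulli's inequality makes `1 - r^a`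
comparable to `1 - r`, hence `∏ⱼ μⱼ / (1 - r^μⱼ) = O((1 - r)^(-n))` while
`|A(r) - i b|⁻¹ ≤ A(r)⁻¹ = O(1 - r)`; as `N ≥ n`, the integrand stays bounded.
-/

open MeasureTheory Real Filter Topology Asymptotics Set

theorem integrableOn_Ioo_of_integrableAtFilter {X E : Type*} [LinearOrder X] [TopologicalSpace X]
    [OrderTopology X] [CompactIccSpace X] [MeasurableSpace X] [NormedAddCommGroup E]
    {μ : Measure X} {f : X → E} {a b : X} (hab : a < b)
    (ha : IntegrableAtFilter f (𝓝[>] a) μ) (hb : IntegrableAtFilter f (𝓝[<] b) μ)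
    (hf : LocallyIntegrableOn f (Ioo a b) μ) : IntegrableOn f (Ioo a b) μ := by
  obtain ⟨s, hs, hfs⟩ := ha
  obtain ⟨t, ht, hft⟩ := hb
  obtain ⟨u, hau, hus⟩ := (mem_nhdsGT_iff_exists_Ioo_subset' hab).mp hs
  obtain ⟨l, hlb, hlt⟩ := (mem_nhdsLT_iff_exists_Ioo_subset' hab).mp ht
  have hmid : IntegrableOn f (Icc u l) μ :=
    hf.integrableOn_compact_subset (Icc_subset_Ioo hau hlb) isCompact_Icc
  refine ((hfs.mono_set hus).union (hmid.union (hft.mono_set hlt))).mono_set fun x hx => ?_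
  by_cases hxu : x < u
  · exact Or.inl ⟨hx.1, hxu⟩
  by_cases hxl : l < x
  · exact Or.inr (Or.inr ⟨hxl, hx.2⟩)
  exact Or.inr (Or.inl ⟨not_lt.mp hxu, not_lt.mp hxl⟩)

lemma Complex.ofReal_sub_I_mul_ne_zero {x : ℝ} (hx : x ≠ 0) (b : ℝ) :
    (x : ℂ) - Complex.I * b ≠ 0 := fun h => hx (by simpa using congrArg Complex.re h)

lemma Complex.norm_inv_ofReal_sub_I_mul_le {x : ℝ} (hx : 0 < x) (b : ℝ) :
    ‖((x : ℂ) - Complex.I * b)⁻¹‖ ≤ x⁻¹ := by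
  rw [norm_inv]
  refine inv_anti₀ hx ?_
  simpa [abs_of_pos hx] using Complex.abs_re_le_norm ((x : ℂ) - Complex.I * b)

lemma one_sub_rpow_le_max_one_mul {r a : ℝ} (hr0 : 0 ≤ r) (hr1 : r ≤ 1) (ha : 0 < a) :
    1 - r ^ a ≤ max 1 a * (1 - r) := by
  rcases le_total a 1 with ha1 | ha1
  · have : r ≤ r ^ a := by simpa using rpow_le_rpow_of_exponent_ge' hr0 hr1 ha.le ha1
    nlinarith [le_max_left 1 a]
  · have : 1 + a * (r - 1) ≤ r ^ a := by
      simpa using one_add_mul_self_le_rpow_one_add (show -1 ≤ r - 1 by linarith) ha1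
    rw [max_eq_right ha1]
    linarith

lemma min_one_mul_le_one_sub_rpow {r a : ℝ} (hr0 : 0 ≤ r) (hr1 : r ≤ 1) (ha : 0 < a) :
    min 1 a * (1 - r) ≤ 1 - r ^ a := by
  rcases le_total a 1 with ha1 | ha1
  · have : r ^ a ≤ 1 + a * (r - 1) := by
      simpa using rpow_one_add_le_one_add_mul_self (show -1 ≤ r - 1 by linarith) ha.le ha1
    rw [min_eq_right ha1]
    linarith
  · have : r ^ a ≤ r := by simpa using rpow_le_rpow_of_exponent_ge' hr0 hr1 zero_le_one ha1
    nlinarith [min_le_left 1 a]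

noncomputable section
variable {n : ℕ} (μ : Fin n → ℝ) (z : Fin n → ℂ) (b : ℝ) (N : ℕ)

def weightProd (t : Fin n → ℝ) : ℂ := ∏ j, (μ j : ℂ) / (1 - (t j : ℂ))

def quadForm (t : Fin n → ℝ) : ℝ := ∑ j, μ j * ((1 + t j) / (1 - t j)) * ‖z j‖ ^ 2

/-- The function `Φ` above; the integrand is `Φ (powVec μ r) - Φ (powVec μ 0)`. -/
def relativeKernel (t : Fin n → ℝ) : ℂ :=
  weightProd μ t * ((quadForm μ z t : ℂ) - Complex.I * b)⁻¹ ^ N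

def powVec (r : ℝ) : Fin n → ℝ := fun j => r ^ μ j

variable {μ z}

lemma differentiableAt_relativeKernel {t : Fin n → ℝ} (ht : ∀ j, t j ≠ 1)
    (hA : quadForm μ z t ≠ 0) :
    DifferentiableAt ℝ (relativeKernel μ z b N) t := by
  have hC : ∀ j, (1 : ℂ) - (t j : ℂ) ≠ 0 := fun j => sub_ne_zero.mpr (mod_cast (ht j).symm)
  have hR : ∀ j, (1 : ℝ) - t j ≠ 0 := fun j => sub_ne_zero.mpr (ht j).symm
  unfold relativeKernel weightProd quadForm at *
  fun_prop (disch := first | exact hC _ | exact hR _ | exact Complex.ofReal_sub_I_mul_ne_zero hA b)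

lemma quadForm_zero_pos (hμ : ∀ j, 0 < μ j) (hz : z ≠ 0) : 0 < quadForm μ z 0 := by
  obtain ⟨j, hj⟩ := Function.ne_iff.mp hz
  simp only [quadForm, Pi.zero_apply, add_zero, sub_zero, div_one, mul_one]
  exact Finset.sum_pos' (fun i _ => mul_nonneg (hμ i).le (sq_nonneg _))
    ⟨j, Finset.mem_univ _, mul_pos (hμ j) (pow_pos (norm_pos_iff.mpr hj) 2)⟩

lemma quadForm_zero_le {t : Fin n → ℝ} (hμ : ∀ j, 0 ≤ μ j) (ht0 : ∀ j, 0 ≤ t j)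
    (ht1 : ∀ j, t j < 1) : quadForm μ z 0 ≤ quadForm μ z t := by
  refine Finset.sum_le_sum fun j _ => ?_
  have : 1 ≤ (1 + t j) / (1 - t j) := by
    rw [le_div_iff₀ (by linarith [ht1 j])]
    linarith [ht0 j]
  simp only [Pi.zero_apply, add_zero, sub_zero, div_one]
  gcongr
  exact hμ j

lemma div_one_sub_le_quadForm {t : Fin n → ℝ} (hμ : ∀ j, 0 ≤ μ j) (ht0 : ∀ j, 0 ≤ t j)
    (ht1 : ∀ j, t j < 1) (i : Fin n) : μ i * ‖z i‖ ^ 2 / (1 - t i) ≤ quadForm μ z t := by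
  have hquot : ∀ j, 0 ≤ (1 + t j) / (1 - t j) := fun j =>
    div_nonneg (by linarith [ht0 j]) (by linarith [ht1 j])
  calc μ i * ‖z i‖ ^ 2 / (1 - t i)
      ≤ μ i * ((1 + t i) / (1 - t i)) * ‖z i‖ ^ 2 := by
        have h1 : 0 < 1 - t i := by linarith [ht1 i]
        rw [mul_right_comm, ← mul_div_assoc, div_le_div_iff_of_pos_right h1]
        exact le_mul_of_one_le_right (mul_nonneg (hμ i) (sq_nonneg _)) (by linarith [ht0 i])
    _ ≤ quadForm μ z t :=
        Finset.single_le_sum (f := fun j => μ j * ((1 + t j) / (1 - t j)) * ‖z j‖ ^ 2)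
          (fun j _ => mul_nonneg (mul_nonneg (hμ j) (hquot j)) (sq_nonneg _)) (Finset.mem_univ i)

lemma powVec_zero (hμ : ∀ j, 0 < μ j) : powVec μ 0 = 0 :=
  funext fun j => zero_rpow (hμ j).ne'

lemma continuous_powVec (hμ : ∀ j, 0 ≤ μ j) : Continuous (powVec μ) :=
  continuous_pi fun j => continuous_rpow_const (hμ j)

lemma weightProd_powVec_zero (hμ : ∀ j, 0 < μ j) :
    weightProd μ (powVec μ 0) = ∏ j, (μ j : ℂ) := by
  simp [weightProd, powVec_zero hμ]

lemma norm_powVec_le {c r : ℝ} (hc : ∀ j, c ≤ μ j) (hr0 : 0 < r) (hr1 : r ≤ 1) :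
    ‖powVec μ r‖ ≤ r ^ c :=
  (pi_norm_le_iff_of_nonneg (rpow_nonneg hr0.le c)).mpr fun j => by
    rw [powVec, Real.norm_of_nonneg (rpow_nonneg hr0.le _)]
    exact rpow_le_rpow_of_exponent_ge hr0 hr1 (hc j)

lemma relativeKernel_powVec_sub_isBigO (hμ : ∀ j, 0 < μ j) (hA : quadForm μ z 0 ≠ 0)
    {c : ℝ} (hc : ∀ j, c ≤ μ j) :
    (fun r => relativeKernel μ z b N (powVec μ r) - relativeKernel μ z b N (powVec μ 0))
      =O[𝓝[>] 0] (fun r => r ^ c) := by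
  rw [powVec_zero hμ]
  have hτ : Tendsto (powVec μ) (𝓝[>] 0) (𝓝 0) := by
    simpa [powVec_zero hμ] using
      ((continuous_powVec fun j => (hμ j).le).tendsto 0).mono_left nhdsWithin_le_nhds
  have hΦ := (differentiableAt_relativeKernel b N (by simp) hA).hasFDerivAt.isBigO_sub
  refine (hΦ.comp_tendsto hτ).trans ?_
  refine IsBigO.of_bound 1 ?_
  filter_upwards [Ioo_mem_nhdsGT one_pos] with r hr
  rw [Function.comp_apply, sub_zero, one_mul, Real.norm_of_nonneg (rpow_nonneg hr.1.le c)]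
  exact norm_powVec_le hc hr.1 hr.2.le

lemma weightProd_powVec_isBigO (hμ : ∀ j, 0 < μ j) :
    (fun r => weightProd μ (powVec μ r)) =O[𝓝[<] 1] (fun r => (1 - r)⁻¹ ^ n) := by
  have hfactor : ∀ j ∈ Finset.univ,
      (fun r => (μ j : ℂ) / (1 - ((r ^ μ j : ℝ) : ℂ))) =O[𝓝[<] 1]
        (fun r => (1 - r)⁻¹) := by
    intro j _
    refine IsBigO.of_bound (μ j / min 1 (μ j)) ?_
    filter_upwards [Ioo_mem_nhdsLT one_pos] with r hr
    have hmin : 0 < min 1 (μ j) := lt_min one_pos (hμ j)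
    have h1r : 0 < 1 - r := sub_pos.mpr hr.2
    have hlow := min_one_mul_le_one_sub_rpow hr.1.le hr.2.le (hμ j)
    rw [← Complex.ofReal_one, ← Complex.ofReal_sub, ← Complex.ofReal_div, Complex.norm_real,
      Real.norm_of_nonneg (div_nonneg (hμ j).le ((mul_pos hmin h1r).le.trans hlow)),
      Real.norm_of_nonneg (inv_nonneg.mpr h1r.le)]
    calc μ j / (1 - r ^ μ j) ≤ μ j / (min 1 (μ j) * (1 - r)) :=
          div_le_div_of_nonneg_left (hμ j).le (by positivity) hlow
      _ = μ j / min 1 (μ j) * (1 - r)⁻¹ := by field_simp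
  have hprod := IsBigO.finsetProd hfactor
  simp only [Finset.prod_const, Finset.card_univ, Fintype.card_fin] at hprod
  exact hprod

lemma inv_quadForm_powVec_isBigO (hμ : ∀ j, 0 < μ j) {i : Fin n} (hi : z i ≠ 0) :
    (fun r => ((quadForm μ z (powVec μ r) : ℂ) - Complex.I * b)⁻¹) =O[𝓝[<] 1]
      (fun r => 1 - r) := by
  have hK : 0 < μ i * ‖z i‖ ^ 2 := mul_pos (hμ i) (pow_pos (norm_pos_iff.mpr hi) 2)
  refine IsBigO.of_bound (max 1 (μ i) / (μ i * ‖z i‖ ^ 2)) ?_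
  filter_upwards [Ioo_mem_nhdsLT one_pos] with r hr
  have ht0 : ∀ j, 0 ≤ powVec μ r j := fun j => rpow_nonneg hr.1.le _
  have ht1 : ∀ j, powVec μ r j < 1 := fun j => rpow_lt_one hr.1.le hr.2 (hμ j)
  have hsub : 0 < 1 - r ^ μ i := sub_pos.mpr (ht1 i)
  have hA : μ i * ‖z i‖ ^ 2 / (1 - r ^ μ i) ≤ quadForm μ z (powVec μ r) :=
    div_one_sub_le_quadForm (fun j => (hμ j).le) ht0 ht1 i
  have hup := one_sub_rpow_le_max_one_mul hr.1.le hr.2.le (hμ i)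
  rw [Real.norm_of_nonneg (sub_nonneg.mpr hr.2.le)]
  calc ‖((quadForm μ z (powVec μ r) : ℂ) - Complex.I * b)⁻¹‖
      ≤ (quadForm μ z (powVec μ r))⁻¹ :=
        Complex.norm_inv_ofReal_sub_I_mul_le (lt_of_lt_of_le (by positivity) hA) b
    _ ≤ (μ i * ‖z i‖ ^ 2 / (1 - r ^ μ i))⁻¹ := inv_anti₀ (by positivity) hA
    _ = (1 - r ^ μ i) / (μ i * ‖z i‖ ^ 2) := inv_div _ _
    _ ≤ max 1 (μ i) * (1 - r) / (μ i * ‖z i‖ ^ 2) := by gcongr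
    _ = max 1 (μ i) / (μ i * ‖z i‖ ^ 2) * (1 - r) := by ring

lemma relativeKernel_powVec_isBigO_one (hμ : ∀ j, 0 < μ j) {i : Fin n} (hi : z i ≠ 0)
    (hN : n ≤ N) :
    (fun r => relativeKernel μ z b N (powVec μ r)) =O[𝓝[<] 1] (fun _ => (1 : ℝ)) := by
  refine ((weightProd_powVec_isBigO hμ).mul
    ((inv_quadForm_powVec_isBigO b hμ hi).pow N)).trans (IsBigO.of_bound 1 ?_)
  filter_upwards [Ioo_mem_nhdsLT one_pos] with r hr
  have h1r : 0 < 1 - r := sub_pos.mpr hr.2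
  rw [inv_pow, mul_comm, ← pow_sub₀ _ h1r.ne' hN, norm_one, mul_one,
    Real.norm_of_nonneg (pow_nonneg h1r.le _)]
  exact pow_le_one₀ h1r.le (by linarith [hr.1])

lemma continuousOn_relativeKernel_powVec (hμ : ∀ j, 0 < μ j) (hA : 0 < quadForm μ z 0) :
    ContinuousOn (fun r => relativeKernel μ z b N (powVec μ r)) (Ico 0 1) := by
  intro r hr
  have ht0 : ∀ j, 0 ≤ powVec μ r j := fun j => rpow_nonneg hr.1 _
  have ht1 : ∀ j, powVec μ r j < 1 := fun j => rpow_lt_one hr.1 hr.2 (hμ j)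
  have hA' : quadForm μ z (powVec μ r) ≠ 0 :=
    (hA.trans_le (quadForm_zero_le (fun j => (hμ j).le) ht0 ht1)).ne'
  exact ((differentiableAt_relativeKernel b N (fun j => (ht1 j).ne) hA').continuousAt.comp
    (continuous_powVec fun j => (hμ j).le).continuousAt).continuousWithinAt

theorem integrableOn_relativeKernel_powVec_sub_div (hμ : ∀ j, 0 < μ j) (hz : z ≠ 0)
    (hN : n ≤ N) :
    IntegrableOn (fun r : ℝ => (relativeKernel μ z b N (powVec μ r) -
      relativeKernel μ z b N (powVec μ 0)) / (r : ℂ)) (Ioo 0 1) := by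
  obtain ⟨i, hi⟩ := Function.ne_iff.mp hz
  obtain ⟨i₀, -, hi₀⟩ := Finset.exists_min_image Finset.univ μ ⟨i, Finset.mem_univ _⟩
  have hA := quadForm_zero_pos hμ hz
  let F : ℝ → ℂ := fun r =>
    relativeKernel μ z b N (powVec μ r) - relativeKernel μ z b N (powVec μ 0)
  change IntegrableOn (fun r : ℝ => F r / r) (Ioo 0 1)
  have hcont : ContinuousOn (fun r : ℝ => F r / r) (Ioo 0 1) :=
    (((continuousOn_relativeKernel_powVec b N hμ hA).mono Ioo_subset_Ico_self).sub
      continuousOn_const).div Complex.continuous_ofReal.continuousOn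
      fun r hr => Complex.ofReal_ne_zero.mpr hr.1.ne'
  have hmeas : ∀ l, Ioo 0 1 ∈ l → StronglyMeasurableAtFilter (fun r : ℝ => F r / r) l :=
    fun l hl => ⟨_, hl, hcont.aestronglyMeasurable measurableSet_Ioo⟩
  have hinv : ∀ l, (fun r : ℝ => (r : ℂ)⁻¹) =O[l] (fun r => r⁻¹) := fun l =>
    IsBigO.of_bound' (Eventually.of_forall fun r => by simp)
  refine integrableOn_Ioo_of_integrableAtFilter one_pos ?_ ?_
    (hcont.locallyIntegrableOn measurableSet_Ioo)
  · have hO := (relativeKernel_powVec_sub_isBigO b N hμ hA.ne'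
      fun j => hi₀ j (Finset.mem_univ j)).mul (hinv _)
    have hpow :
        (fun r : ℝ => r ^ μ i₀ * r⁻¹) =O[𝓝[>] 0] (fun r => r ^ (μ i₀ - 1)) := by
      refine IsBigO.of_bound' ?_
      filter_upwards [self_mem_nhdsWithin] with r (hr : 0 < r)
      rw [rpow_sub_one hr.ne', div_eq_mul_inv]
    simp_rw [div_eq_mul_inv]
    exact (hO.trans hpow).integrableAtFilter (hmeas _ (Ioo_mem_nhdsGT one_pos))
      ⟨_, Ioo_mem_nhdsGT one_pos,
        (intervalIntegral.integrableOn_Ioo_rpow_iff one_pos).mpr (by linarith [hμ i₀])⟩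
  · have hinv₁ : (fun r : ℝ => r⁻¹) =O[𝓝[<] 1] (fun _ => (1 : ℝ)) :=
      ((continuousAt_inv₀ one_ne_zero).tendsto.mono_left nhdsWithin_le_nhds).isBigO_one ℝ
    have hO := ((relativeKernel_powVec_isBigO_one b N hμ hi hN).sub
      (isBigO_const_const (relativeKernel μ z b N (powVec μ 0)) one_ne_zero _)).mul
      ((hinv _).trans hinv₁)
    simp_rw [div_eq_mul_inv]
    exact hO.integrableAtFilter (hmeas _ (Ioo_mem_nhdsLT one_pos))
      ⟨_, Ioo_mem_nhdsLT one_pos, integrableOn_const measure_Ioo_lt_top.ne⟩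

end

theorem subtracted_integrand_integrable_general (n m : ℕ) (hm : 1 ≤ m)
    (μ : Fin n → ℝ) (hμ : ∀ j, 0 < μ j) (z : Fin n → ℂ) (hz : z ≠ 0) (b : ℝ) :
    let A : ℝ → ℝ := fun r =>
      ∑ j, μ j * ((1 + r ^ μ j) / (1 - r ^ μ j)) * ‖z j‖ ^ 2
    let g : ℝ → ℂ := fun r =>
      (∏ j, (μ j : ℂ) / (1 - ((r ^ μ j : ℝ) : ℂ))) *
          (((A r : ℝ) : ℂ) - Complex.I * b)⁻¹ ^ (n + m - 1) -
        (∏ j, (μ j : ℂ)) * (((A 0 : ℝ) : ℂ) - Complex.I * b)⁻¹ ^ (n + m - 1)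
    IntegrableOn (fun r : ℝ => g r / (r : ℂ)) (Set.Ioo 0 1) := by
  intro A g
  have hg : g = fun r => relativeKernel μ z b (n + m - 1) (powVec μ r) -
      relativeKernel μ z b (n + m - 1) (powVec μ 0) := by
    funext r
    simp only [g, relativeKernel, weightProd_powVec_zero hμ]
    rfl
  rw [hg]
  exact integrableOn_relativeKernel_powVec_sub_div b _ hμ hz (by omega)

/-- Absolute convergence of the subtracted integrand in the canonical
relative fundamental solution formula. -/
theorem subtracted_integrand_integrable (n m : ℕ) (hn : 1 ≤ n) (hm : 1 ≤ m)
    (μ : Fin n → ℝ) (hμ : ∀ j, 0 < μ j) (z : Fin n → ℂ) (hz : z ≠ 0) (b : ℝ) :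
    let A : ℝ → ℝ := fun r =>
      ∑ j, μ j * ((1 + r ^ μ j) / (1 - r ^ μ j)) * ‖z j‖ ^ 2
    let g : ℝ → ℂ := fun r =>
      (∏ j, (μ j : ℂ) / (1 - ((r ^ μ j : ℝ) : ℂ))) *
          (((A r : ℝ) : ℂ) - Complex.I * b)⁻¹ ^ (n + m - 1) -
        (∏ j, (μ j : ℂ)) * (((A 0 : ℝ) : ℂ) - Complex.I * b)⁻¹ ^ (n + m - 1)
    IntegrableOn (fun r : ℝ => g r / (r : ℂ)) (Set.Ioo 0 1) :=
  subtracted_integrand_integrable_general n m hm μ hμ z hz b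
end
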